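/- Let N ≥ 3 and 2* = 2N/(N−2). For K > 0, there exists Θ > 0 with N Θ² + (N−2) K Θ^{−2*} ≤ 2 if and only if K ≤ (1/(N−1))^{2(N−1)/(N−2)}. -/
import Mathlib


open Real

theorem stmt_2 (N : ℕ) (hN : 3 ≤ N) (K : ℝ) (hK : 0 < K)
    (p : ℝ) (hp : p = 2 * N / (N - 2)) :
    (∃ Θ : ℝ, 0 < Θ ∧ N * Θ ^ 2 + (N - 2) * K / Θ ^ p ≤ 2) ↔
      K ≤ (1 / ((N : ℝ) - 1)) ^ (2 * ((N : ℝ) - 1) / ((N : ℝ) - 2)) := by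
  have hn3 : (3:ℝ) ≤ (N:ℝ) := by exact_mod_cast hN
  set n : ℝ := (N:ℝ) with hn
  have h2 : (0:ℝ) < n - 2 := by linarith
  have h1 : (0:ℝ) < n - 1 := by linarith
  have h22 : (0:ℝ) < 2*n - 2 := by linarith
  have hw2 : (0:ℝ) < (n-2)/(2*n-2) := div_pos h2 h22
  have hpval : p = 2*n/(n-2) := hp
  have hppos : 0 < p := by rw [hpval]; positivity
  have hexp : (2*n-2)/(n-2) = 2 * (n - 1) / (n - 2) := by ring
  constructor
  · rintro ⟨Θ, hΘ, hle⟩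
    have hΘp : (0:ℝ) < Θ ^ p := Real.rpow_pos_of_pos hΘ p
    have hamgm := Real.geom_mean_le_arith_mean2_weighted
      (w₁ := n/(2*n-2)) (w₂ := (n-2)/(2*n-2)) (p₁ := Θ^2) (p₂ := K/Θ^p)
      (by positivity) (le_of_lt hw2) (by positivity) (by positivity)
      (by field_simp; ring)
    have heq : 2 * (n/(2*n-2)) = p * ((n-2)/(2*n-2)) := by
      rw [hpval]; field_simp
    have hlhs : (Θ^2) ^ (n/(2*n-2)) * (K/Θ^p) ^ ((n-2)/(2*n-2))
        = K ^ ((n-2)/(2*n-2)) := by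
      rw [Real.div_rpow hK.le hΘp.le, ← Real.rpow_natCast Θ 2,
        ← Real.rpow_mul hΘ.le, ← Real.rpow_mul hΘ.le]
      push_cast
      rw [heq, mul_comm, div_mul_cancel₀]
      exact ne_of_gt (Real.rpow_pos_of_pos hΘ _)
    have hrhs : n/(2*n-2) * Θ^2 + (n-2)/(2*n-2) * (K/Θ^p)
        = (n * Θ^2 + (n-2) * K / Θ^p) / (2*n-2) := by
      field_simp
    have hKw : K ^ ((n-2)/(2*n-2)) ≤ 1/(n-1) := by
      have h2' : (2:ℝ)/(2*n-2) = 1/(n-1) := by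
        rw [div_eq_div_iff h22.ne' h1.ne']; ring
      calc K ^ ((n-2)/(2*n-2)) = (Θ^2) ^ (n/(2*n-2)) * (K/Θ^p) ^ ((n-2)/(2*n-2)) := hlhs.symm
        _ ≤ n/(2*n-2) * Θ^2 + (n-2)/(2*n-2) * (K/Θ^p) := hamgm
        _ = (n * Θ^2 + (n-2) * K / Θ^p) / (2*n-2) := hrhs
        _ ≤ 2 / (2*n-2) := by gcongr
        _ = 1/(n-1) := h2'
    have hmono := Real.rpow_le_rpow (by positivity) hKw
      (le_of_lt (by positivity : (0:ℝ) < (2*n-2)/(n-2)))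
    rw [← Real.rpow_mul hK.le] at hmono
    rw [show (n-2)/(2*n-2) * ((2*n-2)/(n-2)) = 1 by field_simp] at hmono
    rw [Real.rpow_one] at hmono
    rw [← hexp]
    exact hmono
  · intro hKle
    set w : ℝ := (n-2)/(2*n-2) with hw
    refine ⟨K ^ ((n-2)/(4*n-4)), Real.rpow_pos_of_pos hK _, ?_⟩
    have h44 : (0:ℝ) < 4*n - 4 := by linarith
    have hΘ2 : (K ^ ((n-2)/(4*n-4)))^2 = K ^ w := by
      rw [← Real.rpow_natCast (K ^ ((n-2)/(4*n-4))) 2, ← Real.rpow_mul hK.le]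
      push_cast
      rw [hw]
      congr 1
      rw [div_mul_eq_mul_div, div_eq_div_iff h44.ne' h22.ne']; ring
    have hΘp : (K ^ ((n-2)/(4*n-4)))^p = K ^ (1 - w) := by
      rw [← Real.rpow_mul hK.le]
      congr 1
      rw [hpval, hw]
      field_simp
      ring
    have hdiv : K / K ^ (1 - w) = K ^ w := by
      rw [show K / K ^ (1-w) = K ^ (1:ℝ) / K ^ (1-w) by rw [Real.rpow_one],
        ← Real.rpow_sub hK]
      norm_num
    have hKw : K ^ w ≤ 1/(n-1) := by
      have := Real.rpow_le_rpow hK.le hKle hw2.le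
      rw [← Real.rpow_mul (by positivity)] at this
      rw [show 2*(n-1)/(n-2) * ((n-2)/(2*n-2)) = 1 by field_simp] at this
      rw [Real.rpow_one] at this
      exact this
    rw [hΘ2, hΘp, mul_div_assoc, hdiv]
    have hfe : (2*n-2) * (1/(n-1)) = 2 := by field_simp
    have hKwpos : 0 < K ^ w := Real.rpow_pos_of_pos hK _
    nlinarith [hKw, hKwpos, hfe, h22]
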